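/- arXiv:2511.09925 — 7 statements merged into one kernel-verified Lean document; each statement's English description precedes it below -/
import Mathlib

section
/- Let U, V be d×d unitary matrices and S a positive semi-definite d×d Hermitian matrix. Set P = ((U+V)/2) S ((U+V)/2)ᴴ and E = ((U−V)/2) S ((U−V)/2)ᴴ. Then for every k, λ_k(P) ≤ λ_k(S), where λ_k denotes the k-th largest eigenvalue. -/
open Matrix
open scoped ComplexOrder

/-- The `k`-th largest entry of a tuple of reals. -/
noncomputable def kthLargest {d : ℕ} (f : Fin d → ℝ) (k : Fin d) : ℝ :=
  (f ∘ Tuple.sort f) k.rev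

section Aux

open Submodule
open scoped InnerProductSpace

variable {n : ℕ}




noncomputable abbrev EL (A : Matrix (Fin n) (Fin n) ℂ) := Matrix.toEuclideanLin A

lemma el_mul (A B : Matrix (Fin n) (Fin n) ℂ) (x : EuclideanSpace ℂ (Fin n)) :
    EL (A * B) x = EL A (EL B x) := by
  simp [Matrix.toEuclideanLin_apply, Matrix.mulVec_mulVec]

lemma el_eigen {A : Matrix (Fin n) (Fin n) ℂ} (hA : A.IsHermitian) (i : Fin n) :
    EL A (hA.eigenvectorBasis i) = (hA.eigenvalues i : ℂ) • hA.eigenvectorBasis i := by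
  ext j
  have := congrFun (hA.mulVec_eigenvectorBasis i) j
  simp only [Pi.smul_apply] at this
  simpa [Matrix.toEuclideanLin_apply, Complex.real_smul] using this

lemma coeff_zero {A : Matrix (Fin n) (Fin n) ℂ} (hA : A.IsHermitian) (T : Set (Fin n))
    {x : EuclideanSpace ℂ (Fin n)} (hx : x ∈ span ℂ (hA.eigenvectorBasis '' T))
    {j : Fin n} (hj : j ∉ T) : ⟪hA.eigenvectorBasis j, x⟫_ℂ = 0 := by
  induction hx using Submodule.span_induction with
  | mem v hv =>
    obtain ⟨i, hi, rfl⟩ := hv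
    exact hA.eigenvectorBasis.orthonormal.2 (fun h => hj (h ▸ hi))
  | zero => simp
  | add v w _ _ hv hw => simp [inner_add_right, hv, hw]
  | smul c v _ hv => simp [inner_smul_right, hv]

lemma rayleigh_eq {A : Matrix (Fin n) (Fin n) ℂ} (hA : A.IsHermitian)
    (x : EuclideanSpace ℂ (Fin n)) :
    (⟪x, EL A x⟫_ℂ).re = ∑ i, hA.eigenvalues i * ‖⟪hA.eigenvectorBasis i, x⟫_ℂ‖ ^ 2 := by
  set b := hA.eigenvectorBasis
  have hsym := (Matrix.isHermitian_iff_isSymmetric.1 hA)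
  have h := b.sum_inner_mul_inner x (EL A x)
  have hterm : ∀ i, ⟪x, b i⟫_ℂ * ⟪b i, EL A x⟫_ℂ
      = ((hA.eigenvalues i * ‖⟪b i, x⟫_ℂ‖ ^ 2 : ℝ) : ℂ) := by
    intro i
    rw [← hsym (b i) x, el_eigen hA i, inner_smul_left, ← inner_conj_symm x (b i)]
    rw [Complex.conj_ofReal]
    push_cast
    rw [mul_comm ((starRingEnd ℂ) ⟪b i, x⟫_ℂ) _, mul_assoc, RCLike.mul_conj]
    ring_nf
    rfl
  rw [← h]
  rw [Finset.sum_congr rfl (fun i _ => hterm i), ← Complex.ofReal_sum]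
  exact Complex.ofReal_re _

lemma norm_sq_eq {A : Matrix (Fin n) (Fin n) ℂ} (hA : A.IsHermitian)
    (x : EuclideanSpace ℂ (Fin n)) :
    ‖x‖ ^ 2 = ∑ i, ‖⟪hA.eigenvectorBasis i, x⟫_ℂ‖ ^ 2 := by
  set b := hA.eigenvectorBasis
  have h := b.sum_inner_mul_inner x x
  have : (⟪x, x⟫_ℂ).re = ∑ i, ‖⟪b i, x⟫_ℂ‖ ^ 2 := by
    rw [← h, Complex.re_sum]
    refine Finset.sum_congr rfl fun i _ => ?_
    rw [← inner_conj_symm x (b i), RCLike.conj_mul]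
    norm_cast
  rw [← this]
  have hxx : ⟪x, x⟫_ℂ = (‖x‖ : ℂ) ^ 2 := inner_self_eq_norm_sq_to_K x
  rw [hxx]
  norm_cast

lemma rayleigh_ge {A : Matrix (Fin n) (Fin n) ℂ} (hA : A.IsHermitian) (c : ℝ) (T : Set (Fin n))
    (hT : ∀ i ∈ T, c ≤ hA.eigenvalues i) {x : EuclideanSpace ℂ (Fin n)}
    (hx : x ∈ span ℂ (hA.eigenvectorBasis '' T)) :
    c * ‖x‖ ^ 2 ≤ (⟪x, EL A x⟫_ℂ).re := by
  rw [rayleigh_eq, norm_sq_eq hA x, Finset.mul_sum]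
  refine Finset.sum_le_sum fun i _ => ?_
  by_cases hi : i ∈ T
  · exact mul_le_mul_of_nonneg_right (hT i hi) (by positivity)
  · rw [coeff_zero hA T hx hi]; simp

lemma rayleigh_le {A : Matrix (Fin n) (Fin n) ℂ} (hA : A.IsHermitian) (c : ℝ) (T : Set (Fin n))
    (hT : ∀ i ∈ T, hA.eigenvalues i ≤ c) {x : EuclideanSpace ℂ (Fin n)}
    (hx : x ∈ span ℂ (hA.eigenvectorBasis '' T)) :
    (⟪x, EL A x⟫_ℂ).re ≤ c * ‖x‖ ^ 2 := by
  rw [rayleigh_eq, norm_sq_eq hA x, Finset.mul_sum]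
  refine Finset.sum_le_sum fun i _ => ?_
  by_cases hi : i ∈ T
  · exact mul_le_mul_of_nonneg_right (hT i hi) (by positivity)
  · rw [coeff_zero hA T hx hi]; simp

lemma finrank_comap_ge {E : Type*} [NormedAddCommGroup E] [InnerProductSpace ℂ E]
    [FiniteDimensional ℂ E] (L : E →ₗ[ℂ] E) (W : Submodule ℂ E) :
    Module.finrank ℂ W ≤ Module.finrank ℂ (W.comap L) := by
  have h1 := LinearMap.finrank_range_add_finrank_ker (W.mkQ ∘ₗ L)
  rw [LinearMap.ker_comp, Submodule.ker_mkQ] at h1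
  have h2 := Submodule.finrank_quotient_add_finrank W
  have h3 : Module.finrank ℂ (LinearMap.range (W.mkQ ∘ₗ L)) ≤ Module.finrank ℂ (E ⧸ W) :=
    (LinearMap.range (W.mkQ ∘ₗ L)).finrank_le
  omega

lemma finrank_span_eigen {A : Matrix (Fin n) (Fin n) ℂ} (hA : A.IsHermitian)
    (T : Finset (Fin n)) :
    Module.finrank ℂ (span ℂ (hA.eigenvectorBasis '' ↑T)) = T.card := by
  rw [Set.image_eq_range]
  have hli : LinearIndependent ℂ (fun x : (↑T : Set (Fin n)) => hA.eigenvectorBasis ↑x) :=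
    (hA.eigenvectorBasis.orthonormal.linearIndependent).comp _ Subtype.val_injective
  rw [finrank_span_eq_card hli]
  simp


end Aux

section Main
open Submodule
open scoped InnerProductSpace

/-- Let `U, V` be unitary and `S` positive semi-definite Hermitian. With
`P = ((U+V)/2) S ((U+V)/2)ᴴ`, every `k`-th largest eigenvalue of `P` is at most the
`k`-th largest eigenvalue of `S`. -/
theorem stmt2 {d : ℕ} (U V S : Matrix (Fin d) (Fin d) ℂ)
    (hU : U ∈ Matrix.unitaryGroup (Fin d) ℂ) (hV : V ∈ Matrix.unitaryGroup (Fin d) ℂ)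
    (hS : S.PosSemidef)
    (hP : ((((1 : ℂ) / 2) • (U + V)) * S * (((1 : ℂ) / 2) • (U + V))ᴴ).IsHermitian) :
    ∀ k, kthLargest hP.eigenvalues k ≤ kthLargest hS.1.eigenvalues k := by
  intro k
  classical
  set M : Matrix (Fin d) (Fin d) ℂ := ((1 : ℂ) / 2) • (U + V) with hM
  set N : Matrix (Fin d) (Fin d) ℂ := ((1 : ℂ) / 2) • (U - V) with hN
  set f : Fin d → ℝ := hP.eigenvalues with hf
  set g : Fin d → ℝ := hS.1.eigenvalues with hg
  set σP := Tuple.sort f with hσP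
  set σS := Tuple.sort g with hσS
  set α : ℝ := kthLargest f k with hα
  set β : ℝ := kthLargest g k with hβ
  have hαdef : α = f (σP k.rev) := rfl
  have hβdef : β = g (σS k.rev) := rfl
  -- matrix identity
  have hUU : U * Uᴴ = 1 := by
    simpa [Matrix.star_eq_conjTranspose] using (Matrix.mem_unitaryGroup_iff.mp hU)
  have hVV : V * Vᴴ = 1 := by
    simpa [Matrix.star_eq_conjTranspose] using (Matrix.mem_unitaryGroup_iff.mp hV)
  have hMN : M * Mᴴ + N * Nᴴ = 1 := by
    rw [hM, hN]
    simp only [Matrix.conjTranspose_smul, Matrix.smul_mul, Matrix.mul_smul,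
      Matrix.add_mul, Matrix.mul_add, Matrix.sub_mul, Matrix.mul_sub,
      Matrix.conjTranspose_add, Matrix.conjTranspose_sub, hUU, hVV, smul_smul]
    have hstar : star ((1:ℂ)/2) = (1:ℂ)/2 := by norm_num
    rw [hstar]
    module
  -- adjoint fact
  have hadj : ∀ (A : Matrix (Fin d) (Fin d) ℂ) (x z : EuclideanSpace ℂ (Fin d)),
      ⟪EL Aᴴ x, z⟫_ℂ = ⟪x, EL A z⟫_ℂ := by
    intro A x z
    have hAe : EL Aᴴ = LinearMap.adjoint (EL A) :=
      Matrix.toEuclideanLin_conjTranspose_eq_adjoint A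
    rw [hAe]
    exact LinearMap.adjoint_inner_left _ z x
  -- norm bound
  have hnorm : ∀ x : EuclideanSpace ℂ (Fin d), ‖EL Mᴴ x‖ ^ 2 ≤ ‖x‖ ^ 2 := by
    intro x
    have e1 : ‖EL Mᴴ x‖ ^ 2 = (⟪x, EL (M * Mᴴ) x⟫_ℂ).re := by
      rw [el_mul, ← hadj M x (EL Mᴴ x), ← inner_self_eq_norm_sq (𝕜 := ℂ) (EL Mᴴ x)]
      simp [RCLike.re_to_complex]
    have e2 : ‖EL Nᴴ x‖ ^ 2 = (⟪x, EL (N * Nᴴ) x⟫_ℂ).re := by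
      rw [el_mul, ← hadj N x (EL Nᴴ x), ← inner_self_eq_norm_sq (𝕜 := ℂ) (EL Nᴴ x)]
      simp [RCLike.re_to_complex]
    have e3 : (⟪x, EL (M * Mᴴ) x⟫_ℂ).re + (⟪x, EL (N * Nᴴ) x⟫_ℂ).re = ‖x‖ ^ 2 := by
      rw [← Complex.add_re, ← inner_add_right]
      have : EL (M * Mᴴ) x + EL (N * Nᴴ) x = x := by
        rw [← LinearMap.add_apply, ← map_add, hMN]
        simp [Matrix.toEuclideanLin_apply]
      rw [this, ← inner_self_eq_norm_sq (𝕜 := ℂ) x]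
      simp [RCLike.re_to_complex]
    nlinarith [sq_nonneg ‖EL Nᴴ x‖]
  -- index sets
  set T₁ : Finset (Fin d) := Finset.univ.filter (fun i => α ≤ f i) with hT₁
  set T₂ : Finset (Fin d) := Finset.univ.filter (fun i => g i ≤ β) with hT₂
  have hcard1 : k.val + 1 ≤ T₁.card := by
    have hmem1 : ∀ j, k.rev ≤ j → σP j ∈ T₁ := by
      intro j hj
      rw [hT₁]
      simp only [Finset.mem_filter, Finset.mem_univ, true_and]
      exact Tuple.monotone_sort f hj
    have h := Finset.card_le_card_of_injOn σP
      (fun j hj => hmem1 j (Finset.mem_Ici.mp hj)) (σP.injective.injOn)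
    rw [Fin.card_Ici] at h
    have := k.isLt
    have hrev : (k.rev : ℕ) = d - (k.val + 1) := Fin.val_rev k
    omega
  have hcard2 : d - k.val ≤ T₂.card := by
    have hmem2 : ∀ j, j ≤ k.rev → σS j ∈ T₂ := by
      intro j hj
      rw [hT₂]
      simp only [Finset.mem_filter, Finset.mem_univ, true_and]
      exact Tuple.monotone_sort g hj
    have h := Finset.card_le_card_of_injOn σS
      (fun j hj => hmem2 j (Finset.mem_Iic.mp hj)) (σS.injective.injOn)
    rw [Fin.card_Iic] at h
    have := k.isLt
    have hrev : (k.rev : ℕ) = d - (k.val + 1) := Fin.val_rev k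
    omega
  -- subspaces
  set V₁ : Submodule ℂ (EuclideanSpace ℂ (Fin d)) :=
    span ℂ (hP.eigenvectorBasis '' ↑T₁) with hV₁
  set W : Submodule ℂ (EuclideanSpace ℂ (Fin d)) :=
    span ℂ (hS.1.eigenvectorBasis '' ↑T₂) with hW
  set V₂ : Submodule ℂ (EuclideanSpace ℂ (Fin d)) := W.comap (EL Mᴴ) with hV₂
  have hr1 : Module.finrank ℂ V₁ = T₁.card := finrank_span_eigen hP T₁
  have hrW : Module.finrank ℂ W = T₂.card := finrank_span_eigen hS.1 T₂
  have hr2 : T₂.card ≤ Module.finrank ℂ V₂ := hrW ▸ finrank_comap_ge (EL Mᴴ) W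
  -- nontrivial intersection
  have hsum := Submodule.finrank_sup_add_finrank_inf_eq V₁ V₂
  have hle : Module.finrank ℂ ↥(V₁ ⊔ V₂) ≤ d := by
    simpa [finrank_euclideanSpace] using (V₁ ⊔ V₂).finrank_le
  have hpos : 0 < Module.finrank ℂ ↥(V₁ ⊓ V₂) := by omega
  obtain ⟨⟨x, hxmem⟩, hxne⟩ := Module.finrank_pos_iff_exists_ne_zero.mp hpos
  have hx0 : x ≠ 0 := fun h => hxne (Subtype.ext h)
  have hx1 : x ∈ V₁ := hxmem.1
  set y : EuclideanSpace ℂ (Fin d) := EL Mᴴ x with hy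
  have hx2 : y ∈ W := hxmem.2
  -- rayleigh bounds
  have hA1 : α * ‖x‖ ^ 2 ≤ (⟪x, EL (M * S * Mᴴ) x⟫_ℂ).re := by
    refine rayleigh_ge hP α ↑T₁ (fun i hi => ?_) hx1
    exact (Finset.mem_filter.mp (Finset.mem_coe.mp hi)).2
  have hA2 : (⟪y, EL S y⟫_ℂ).re ≤ β * ‖y‖ ^ 2 := by
    refine rayleigh_le hS.1 β ↑T₂ (fun i hi => ?_) hx2
    exact (Finset.mem_filter.mp (Finset.mem_coe.mp hi)).2
  have hPy : ⟪x, EL (M * S * Mᴴ) x⟫_ℂ = ⟪y, EL S y⟫_ℂ := by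
    have : EL (M * S * Mᴴ) x = EL M (EL S y) := by rw [el_mul, el_mul]
    rw [this, ← hadj M x (EL S y)]
  have hβ0 : 0 ≤ β := by rw [hβdef]; exact hS.eigenvalues_nonneg _
  have hxpos : (0:ℝ) < ‖x‖ ^ 2 := by
    have := norm_pos_iff.mpr hx0
    positivity
  have chain : α * ‖x‖ ^ 2 ≤ β * ‖x‖ ^ 2 := by
    calc α * ‖x‖ ^ 2 ≤ (⟪x, EL (M * S * Mᴴ) x⟫_ℂ).re := hA1
      _ = (⟪y, EL S y⟫_ℂ).re := by rw [hPy]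
      _ ≤ β * ‖y‖ ^ 2 := hA2
      _ ≤ β * ‖x‖ ^ 2 := mul_le_mul_of_nonneg_left (hnorm x) hβ0
  exact le_of_mul_le_mul_right chain hxpos

end Main
end

section
/- Let U, V be d×d unitary matrices and S a positive semi-definite Hermitian matrix. Set P = ((U+V)/2) S ((U+V)/2)ᴴ and E = ((U−V)/2) S ((U−V)/2)ᴴ. Then the smallest eigenvalue satisfies λ_min(S) ≤ λ_min(P) + ‖E‖_op, and for all k, λ_k(S) ≤ 2(λ_k(P) + ‖E‖_op). -/
open Matrix
open scoped ComplexOrder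

/-- The operator (spectral) norm of a complex matrix, acting on Euclidean space. -/
noncomputable def opNorm {d : ℕ} (A : Matrix (Fin d) (Fin d) ℂ) : ℝ :=
  ‖(Matrix.toEuclideanCLM (𝕜 := ℂ) A : EuclideanSpace ℂ (Fin d) →L[ℂ] EuclideanSpace ℂ (Fin d))‖

/-!
With `A = (U + V) / 2` and `B = (U - V) / 2` one has `Aᴴ + Bᴴ = Uᴴ` and `Aᴴ - Bᴴ = Vᴴ`, so the
parallelogram law for the quadratic form of `S` gives
`re ⟪P x, x⟫ + re ⟪E x, x⟫ = (re ⟪S Uᴴx, Uᴴx⟫ + re ⟪S Vᴴx, Vᴴx⟫) / 2`, while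
`|re ⟪E x, x⟫| ≤ ‖E‖ ‖x‖²`. Both terms of the average are at least `λ_min(S) ‖x‖²`, and `λ_min(P)`
is the minimum of the Rayleigh quotient of `P`: this is the first bound. For the second, let `W` be
spanned by eigenvectors of `S` for its `k + 1` largest eigenvalues. On the `(k + 1)`-dimensional
space `U W` the first term is at least `λ_k(S) ‖x‖²` and the second is nonnegative, so
`re ⟪P x, x⟫ ≥ (λ_k(S) / 2 - ‖E‖) ‖x‖²` there, and the Courant–Fischer min-max principle turns
this into `λ_k(P) ≥ λ_k(S) / 2 - ‖E‖`.
-/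

open scoped InnerProductSpace

section kthLargest

variable {d : ℕ} (f : Fin d → ℝ) (k : Fin d)

theorem exists_card_eq_forall_le_kthLargest :
    ∃ s : Finset (Fin d), s.card = d - k ∧ ∀ i ∈ s, f i ≤ kthLargest f k := by
  refine ⟨(Finset.Iic k.rev).map (Tuple.sort f).toEmbedding, ?_, ?_⟩
  · rw [Finset.card_map, Fin.card_Iic, Fin.val_rev]
    omega
  · simp only [Finset.mem_map, Finset.mem_Iic]
    rintro _ ⟨j, hj, rfl⟩
    exact Tuple.monotone_sort f hj

theorem exists_card_eq_forall_kthLargest_le :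
    ∃ s : Finset (Fin d), s.card = k + 1 ∧ ∀ i ∈ s, kthLargest f k ≤ f i := by
  refine ⟨(Finset.Ici k.rev).map (Tuple.sort f).toEmbedding, ?_, ?_⟩
  · rw [Finset.card_map, Fin.card_Ici, Fin.val_rev]
    omega
  · simp only [Finset.mem_map, Finset.mem_Ici]
    rintro _ ⟨j, hj, rfl⟩
    exact Tuple.monotone_sort f hj

end kthLargest

namespace OrthonormalBasis

variable {ι 𝕜 E : Type*} [Fintype ι] [RCLike 𝕜] [NormedAddCommGroup E] [InnerProductSpace 𝕜 E]
  (b : OrthonormalBasis ι 𝕜 E)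

theorem inner_eq_zero_of_mem_span_image {s : Set ι} {i : ι} (hi : i ∉ s) {x : E}
    (hx : x ∈ Submodule.span 𝕜 (b '' s)) : ⟪b i, x⟫_𝕜 = 0 := by
  obtain ⟨l, hl, rfl⟩ := (Finsupp.mem_span_image_iff_linearCombination 𝕜).mp hx
  exact inner_eq_zero_symm.mp (b.orthonormal.inner_finsupp_eq_zero hi hl)

theorem finrank_span_image (s : Finset ι) :
    Module.finrank 𝕜 (Submodule.span 𝕜 (b '' s)) = s.card := by
  have hli : LinearIndependent 𝕜 fun i : (s : Set ι) => b i :=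
    b.orthonormal.linearIndependent.comp _ Subtype.val_injective
  rw [Set.image_eq_range, finrank_span_eq_card hli]
  simp

end OrthonormalBasis

namespace ContinuousLinearMap

variable {𝕜 H : Type*} [RCLike 𝕜] [NormedAddCommGroup H] [InnerProductSpace 𝕜 H]

theorem reApplyInnerSelf_add_add_reApplyInnerSelf_sub (T : H →L[𝕜] H) (x y : H) :
    T.reApplyInnerSelf (x + y) + T.reApplyInnerSelf (x - y) =
      2 * (T.reApplyInnerSelf x + T.reApplyInnerSelf y) := by
  simp only [reApplyInnerSelf_apply, map_add, map_sub, inner_add_left, inner_add_right,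
    inner_sub_left, inner_sub_right]
  ring

theorem abs_reApplyInnerSelf_le (T : H →L[𝕜] H) (x : H) :
    |T.reApplyInnerSelf x| ≤ ‖T‖ * ‖x‖ ^ 2 := by
  grw [reApplyInnerSelf_apply, RCLike.abs_re_le_norm, norm_inner_le_norm, le_opNorm, mul_assoc,
    ← sq]

theorem reApplyInnerSelf_mul_mul_adjoint [CompleteSpace H] (T u : H →L[𝕜] H) (x : H) :
    (u * T * adjoint u).reApplyInnerSelf x = T.reApplyInnerSelf (adjoint u x) := by
  simp only [reApplyInnerSelf_apply, mul_apply_eq_comp, adjoint_inner_right]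

end ContinuousLinearMap

namespace Matrix

variable {𝕜 n : Type*} [RCLike 𝕜] [Fintype n] [DecidableEq n]

local notation "𝒯" => toEuclideanCLM (𝕜 := 𝕜)

theorem reApplyInnerSelf_toEuclideanCLM_mul_mul_conjTranspose (W M : Matrix n n 𝕜)
    (x : EuclideanSpace 𝕜 n) :
    (𝒯 (W * M * Wᴴ)).reApplyInnerSelf x = (𝒯 M).reApplyInnerSelf (𝒯 Wᴴ x) := by
  rw [← star_eq_conjTranspose, map_mul, map_mul, map_star, ContinuousLinearMap.star_eq_adjoint,
    ContinuousLinearMap.reApplyInnerSelf_mul_mul_adjoint]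

theorem norm_toEuclideanCLM_conjTranspose_apply {U : Matrix n n 𝕜} (hU : U ∈ unitaryGroup n 𝕜)
    (x : EuclideanSpace 𝕜 n) : ‖𝒯 Uᴴ x‖ = ‖x‖ :=
  ContinuousLinearMap.norm_map_of_mem_unitary (Unitary.map_mem _ (Unitary.star_mem hU)) x

theorem toEuclideanCLM_conjTranspose_apply_toEuclideanCLM_apply {U : Matrix n n 𝕜}
    (hU : U ∈ unitaryGroup n 𝕜) (x : EuclideanSpace 𝕜 n) : 𝒯 Uᴴ (𝒯 U x) = x := by
  rw [← mul_apply_eq_comp, ← map_mul, ← star_eq_conjTranspose, Unitary.star_mul_self_of_mem hU,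
    map_one, one_apply_eq_self]

namespace IsHermitian

variable {A : Matrix n n 𝕜} (hA : A.IsHermitian)
include hA

theorem toEuclideanCLM_eigenvectorBasis (i : n) :
    𝒯 A (hA.eigenvectorBasis i) = (hA.eigenvalues i : 𝕜) • hA.eigenvectorBasis i := by
  ext j
  simpa [ofLp_toEuclideanCLM] using congrFun (hA.mulVec_eigenvectorBasis i) j

theorem reApplyInnerSelf_toEuclideanCLM (x : EuclideanSpace 𝕜 n) :
    (𝒯 A).reApplyInnerSelf x = ∑ i, hA.eigenvalues i * ‖⟪hA.eigenvectorBasis i, x⟫_𝕜‖ ^ 2 := by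
  have hsymm : (𝒯 A : EuclideanSpace 𝕜 n →ₗ[𝕜] _).IsSymmetric := by
    rw [coe_toEuclideanCLM_eq_toEuclideanLin]
    exact isSymmetric_toEuclideanLin_iff.mpr hA
  rw [ContinuousLinearMap.reApplyInnerSelf_apply, ← hA.eigenvectorBasis.sum_inner_mul_inner,
    map_sum]
  refine Finset.sum_congr rfl fun i _ => ?_
  rw [show ⟪𝒯 A x, hA.eigenvectorBasis i⟫_𝕜 = _ from hsymm _ _, ContinuousLinearMap.coe_coe,
    hA.toEuclideanCLM_eigenvectorBasis, inner_smul_right, mul_assoc, ← inner_conj_symm,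
    RCLike.conj_mul, ← RCLike.ofReal_pow, ← RCLike.ofReal_mul, RCLike.ofReal_re]

theorem reApplyInnerSelf_toEuclideanCLM_eigenvectorBasis (i : n) :
    (𝒯 A).reApplyInnerSelf (hA.eigenvectorBasis i) = hA.eigenvalues i := by
  rw [ContinuousLinearMap.reApplyInnerSelf_apply, hA.toEuclideanCLM_eigenvectorBasis,
    inner_smul_left, inner_self_eq_norm_sq_to_K, hA.eigenvectorBasis.orthonormal.1 i]
  simp

theorem mul_norm_sq_le_reApplyInnerSelf {c : ℝ} {x : EuclideanSpace 𝕜 n}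
    (hc : ∀ i, ⟪hA.eigenvectorBasis i, x⟫_𝕜 ≠ 0 → c ≤ hA.eigenvalues i) :
    c * ‖x‖ ^ 2 ≤ (𝒯 A).reApplyInnerSelf x := by
  rw [hA.reApplyInnerSelf_toEuclideanCLM, ← hA.eigenvectorBasis.sum_sq_norm_inner_right,
    Finset.mul_sum]
  refine Finset.sum_le_sum fun i _ => ?_
  by_cases hi : ⟪hA.eigenvectorBasis i, x⟫_𝕜 = 0
  · simp [hi]
  · exact mul_le_mul_of_nonneg_right (hc i hi) (sq_nonneg _)

theorem reApplyInnerSelf_le_mul_norm_sq {c : ℝ} {x : EuclideanSpace 𝕜 n}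
    (hc : ∀ i, ⟪hA.eigenvectorBasis i, x⟫_𝕜 ≠ 0 → hA.eigenvalues i ≤ c) :
    (𝒯 A).reApplyInnerSelf x ≤ c * ‖x‖ ^ 2 := by
  rw [hA.reApplyInnerSelf_toEuclideanCLM, ← hA.eigenvectorBasis.sum_sq_norm_inner_right,
    Finset.mul_sum]
  refine Finset.sum_le_sum fun i _ => ?_
  by_cases hi : ⟪hA.eigenvectorBasis i, x⟫_𝕜 = 0
  · simp [hi]
  · exact mul_le_mul_of_nonneg_right (hc i hi) (sq_nonneg _)

theorem iInf_eigenvalues_mul_norm_sq_le (x : EuclideanSpace 𝕜 n) :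
    (⨅ i, hA.eigenvalues i) * ‖x‖ ^ 2 ≤ (𝒯 A).reApplyInnerSelf x :=
  hA.mul_norm_sq_le_reApplyInnerSelf fun i _ => ciInf_le (Set.finite_range _).bddBelow i

theorem le_iInf_eigenvalues [Nonempty n] {c : ℝ}
    (hc : ∀ x, c * ‖x‖ ^ 2 ≤ (𝒯 A).reApplyInnerSelf x) : c ≤ ⨅ i, hA.eigenvalues i :=
  le_ciInf fun i => by
    simpa [hA.reApplyInnerSelf_toEuclideanCLM_eigenvectorBasis,
      hA.eigenvectorBasis.orthonormal.1 i] using hc (hA.eigenvectorBasis i)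

end IsHermitian

theorem PosSemidef.reApplyInnerSelf_nonneg {A : Matrix n n 𝕜} (hA : A.PosSemidef)
    (x : EuclideanSpace 𝕜 n) : 0 ≤ (𝒯 A).reApplyInnerSelf x := by
  simpa using hA.1.mul_norm_sq_le_reApplyInnerSelf fun i _ => hA.eigenvalues_nonneg i

theorem IsHermitian.le_kthLargest_eigenvalues {d : ℕ} {A : Matrix (Fin d) (Fin d) 𝕜}
    (hA : A.IsHermitian) (k : Fin d) {c : ℝ} {W : Submodule 𝕜 (EuclideanSpace 𝕜 (Fin d))}
    (hW : k + 1 ≤ Module.finrank 𝕜 W) (hc : ∀ x ∈ W, c * ‖x‖ ^ 2 ≤ (𝒯 A).reApplyInnerSelf x) :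
    c ≤ kthLargest hA.eigenvalues k := by
  obtain ⟨s, hs, hle⟩ := exists_card_eq_forall_le_kthLargest hA.eigenvalues k
  set W' := Submodule.span 𝕜 (hA.eigenvectorBasis '' s)
  have hWW' : ¬ Disjoint W W' := fun h => by
    have := Submodule.finrank_add_finrank_le_of_disjoint h
    rw [finrank_euclideanSpace_fin, hA.eigenvectorBasis.finrank_span_image, hs] at this
    omega
  obtain ⟨x, hxW, hxW', hx⟩ : ∃ x ∈ W, x ∈ W' ∧ x ≠ 0 := by
    simpa [Submodule.disjoint_def] using hWW'
  have hupper := hA.reApplyInnerSelf_le_mul_norm_sq (x := x) (c := kthLargest hA.eigenvalues k)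
    fun i hi => hle i (by_contra fun his => hi
      (hA.eigenvectorBasis.inner_eq_zero_of_mem_span_image his hxW'))
  exact le_of_mul_le_mul_right ((hc x hxW).trans hupper) (by positivity)

section

variable (U V S : Matrix n n 𝕜)

local notation "P" => (((1 : 𝕜) / 2) • (U + V)) * S * (((1 : 𝕜) / 2) • (U + V))ᴴ
local notation "E" => (((1 : 𝕜) / 2) • (U - V)) * S * (((1 : 𝕜) / 2) • (U - V))ᴴ

theorem reApplyInnerSelf_add_reApplyInnerSelf_eq_average (x : EuclideanSpace 𝕜 n) :
    (𝒯 P).reApplyInnerSelf x + (𝒯 E).reApplyInnerSelf x =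
      ((𝒯 S).reApplyInnerSelf (𝒯 Uᴴ x) + (𝒯 S).reApplyInnerSelf (𝒯 Vᴴ x)) / 2 := by
  have h2 : star ((1 : 𝕜) / 2) = 1 / 2 := by simp
  have hadd : (((1 : 𝕜) / 2) • (U + V))ᴴ + (((1 : 𝕜) / 2) • (U - V))ᴴ = Uᴴ := by
    simp only [conjTranspose_smul, conjTranspose_add, conjTranspose_sub, h2]
    module
  have hsub : (((1 : 𝕜) / 2) • (U + V))ᴴ - (((1 : 𝕜) / 2) • (U - V))ᴴ = Vᴴ := by
    simp only [conjTranspose_smul, conjTranspose_add, conjTranspose_sub, h2]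
    module
  have hpar := (𝒯 S).reApplyInnerSelf_add_add_reApplyInnerSelf_sub
    (𝒯 (((1 : 𝕜) / 2) • (U + V))ᴴ x) (𝒯 (((1 : 𝕜) / 2) • (U - V))ᴴ x)
  rw [← _root_.add_apply, ← _root_.sub_apply, ← map_add, ← map_sub, hadd, hsub] at hpar
  rw [reApplyInnerSelf_toEuclideanCLM_mul_mul_conjTranspose,
    reApplyInnerSelf_toEuclideanCLM_mul_mul_conjTranspose]
  linarith

theorem average_sub_le_reApplyInnerSelf (x : EuclideanSpace 𝕜 n) :
    ((𝒯 S).reApplyInnerSelf (𝒯 Uᴴ x) + (𝒯 S).reApplyInnerSelf (𝒯 Vᴴ x)) / 2 -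
      ‖𝒯 E‖ * ‖x‖ ^ 2 ≤ (𝒯 P).reApplyInnerSelf x := by
  have hE := (abs_le.mp ((𝒯 E).abs_reApplyInnerSelf_le x)).2
  linarith [reApplyInnerSelf_add_reApplyInnerSelf_eq_average U V S x]

variable {U V S}

theorem iInf_eigenvalues_le_iInf_eigenvalues_add_norm [Nonempty n]
    (hU : U ∈ unitaryGroup n 𝕜) (hV : V ∈ unitaryGroup n 𝕜) (hS : S.IsHermitian)
    (hP : (P).IsHermitian) :
    (⨅ i, hS.eigenvalues i) ≤ (⨅ i, hP.eigenvalues i) + ‖𝒯 E‖ := by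
  suffices (⨅ i, hS.eigenvalues i) - ‖𝒯 E‖ ≤ ⨅ i, hP.eigenvalues i by linarith
  refine hP.le_iInf_eigenvalues fun x => ?_
  have hUx := hS.iInf_eigenvalues_mul_norm_sq_le (𝒯 Uᴴ x)
  have hVx := hS.iInf_eigenvalues_mul_norm_sq_le (𝒯 Vᴴ x)
  rw [norm_toEuclideanCLM_conjTranspose_apply hU] at hUx
  rw [norm_toEuclideanCLM_conjTranspose_apply hV] at hVx
  linarith [average_sub_le_reApplyInnerSelf U V S x]

end

section

variable {d : ℕ} {U V S : Matrix (Fin d) (Fin d) 𝕜}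

local notation "P" => (((1 : 𝕜) / 2) • (U + V)) * S * (((1 : 𝕜) / 2) • (U + V))ᴴ
local notation "E" => (((1 : 𝕜) / 2) • (U - V)) * S * (((1 : 𝕜) / 2) • (U - V))ᴴ

theorem kthLargest_eigenvalues_le_two_mul_add_norm (hU : U ∈ unitaryGroup (Fin d) 𝕜)
    (hS : S.PosSemidef) (hP : (P).IsHermitian) (k : Fin d) :
    kthLargest hS.1.eigenvalues k ≤ 2 * (kthLargest hP.eigenvalues k + ‖𝒯 E‖) := by
  suffices kthLargest hS.1.eigenvalues k / 2 - ‖𝒯 E‖ ≤ kthLargest hP.eigenvalues k by linarith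
  obtain ⟨s, hs, hle⟩ := exists_card_eq_forall_kthLargest_le hS.1.eigenvalues k
  let u := Unitary.linearIsometryEquiv ⟨𝒯 U, Unitary.map_mem _ hU⟩
  refine hP.le_kthLargest_eigenvalues k
    (W := (Submodule.span 𝕜 (hS.1.eigenvectorBasis '' s)).map (u.toLinearEquiv : _ →ₗ[𝕜] _))
    ?_ ?_
  · rw [LinearEquiv.finrank_map_eq, hS.1.eigenvectorBasis.finrank_span_image, hs]
  rintro _ ⟨y, hy, rfl⟩
  have hUy : 𝒯 Uᴴ (u y) = y := toEuclideanCLM_conjTranspose_apply_toEuclideanCLM_apply hU y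
  have hSy : kthLargest hS.1.eigenvalues k * ‖y‖ ^ 2 ≤ (𝒯 S).reApplyInnerSelf y :=
    hS.1.mul_norm_sq_le_reApplyInnerSelf fun i hi => hle i (by_contra fun his => hi
      (hS.1.eigenvectorBasis.inner_eq_zero_of_mem_span_image his hy))
  have hSVy := hS.reApplyInnerSelf_nonneg (𝒯 Vᴴ (u y))
  have hPy := average_sub_le_reApplyInnerSelf U V S (u y)
  rw [hUy, u.norm_map] at hPy
  simp only [LinearEquiv.coe_coe, LinearIsometryEquiv.coe_toLinearEquiv, u.norm_map]
  linarith

end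

end Matrix

/-- With `P = ((U+V)/2) S ((U+V)/2)ᴴ` and `E = ((U−V)/2) S ((U−V)/2)ᴴ` for unitary `U, V`
and PSD Hermitian `S`: `λ_min(S) ≤ λ_min(P) + ‖E‖_op` and `λ_k(S) ≤ 2(λ_k(P) + ‖E‖_op)`. -/
theorem stmt3 {d : ℕ} (U V S : Matrix (Fin d) (Fin d) ℂ)
    (hU : U ∈ Matrix.unitaryGroup (Fin d) ℂ) (hV : V ∈ Matrix.unitaryGroup (Fin d) ℂ)
    (hS : S.PosSemidef)
    (hP : ((((1 : ℂ) / 2) • (U + V)) * S * (((1 : ℂ) / 2) • (U + V))ᴴ).IsHermitian) :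
    (⨅ k, hS.1.eigenvalues k) ≤ (⨅ k, hP.eigenvalues k) +
        opNorm ((((1 : ℂ) / 2) • (U - V)) * S * (((1 : ℂ) / 2) • (U - V))ᴴ) ∧
      ∀ k, kthLargest hS.1.eigenvalues k ≤
        2 * (kthLargest hP.eigenvalues k +
          opNorm ((((1 : ℂ) / 2) • (U - V)) * S * (((1 : ℂ) / 2) • (U - V))ᴴ)) := by
  refine ⟨?_, kthLargest_eigenvalues_le_two_mul_add_norm hU hS hP⟩
  rcases isEmpty_or_nonempty (Fin d) with hd | hd
  · rw [Real.iInf_of_isEmpty, Real.iInf_of_isEmpty, zero_add]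
    exact norm_nonneg _
  · exact iInf_eigenvalues_le_iInf_eigenvalues_add_norm hU hV hS.1 hP
end

section
/- Let N ≥ 2 and let W_1, …, W_N be d×d matrices satisfying the balance conditions W_j W_jᴴ = W_{j+1}ᴴ W_{j+1} for all 1 ≤ j ≤ N−1. Then for each 1 ≤ j ≤ N, (W_N W_{N−1} ⋯ W_j)(W_N W_{N−1} ⋯ W_j)ᴴ = (W_N W_Nᴴ)^{N−j+1}. -/
open Matrix

/-- The ordered product `W_N * W_{N-1} * ⋯ * W_j` (the identity if `j > N`). -/
noncomputable def prodFrom {d : ℕ} (W : ℕ → Matrix (Fin d) (Fin d) ℂ) (j N : ℕ) :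
    Matrix (Fin d) (Fin d) ℂ :=
  ((List.range (N + 1 - j)).map (fun i => W (N - i))).prod

lemma sandwich_pow {M : Type*} [Monoid M] (a b : M) (m : ℕ) :
    a * (b * a) ^ m * b = (a * b) ^ (m + 1) := by
  induction m with
  | zero => simp [pow_succ]
  | succ n ih =>
      simp only [pow_succ, ← mul_assoc, ih]

lemma prodFrom_succ {d : ℕ} (W : ℕ → Matrix (Fin d) (Fin d) ℂ) {j N : ℕ} (h : j ≤ N) :
    prodFrom W j N = prodFrom W (j + 1) N * W j := by
  unfold prodFrom
  have h1 : N + 1 - j = (N - j) + 1 := by omega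
  have h2 : N + 1 - (j + 1) = N - j := by omega
  rw [h1, h2, List.range_succ, List.map_append, List.prod_append]
  have h3 : N - (N - j) = j := by omega
  simp [h3]

lemma prodFrom_self {d : ℕ} (W : ℕ → Matrix (Fin d) (Fin d) ℂ) (N : ℕ) :
    prodFrom W N N = W N := by
  have : N + 1 - N = 1 := by omega
  simp [prodFrom, this, List.range_succ, List.range_zero]

/-- Under the balance conditions `W_j W_jᴴ = W_{j+1}ᴴ W_{j+1}` for `1 ≤ j ≤ N − 1`, for every
`1 ≤ j ≤ N` one has `(W_N ⋯ W_j)(W_N ⋯ W_j)ᴴ = (W_N W_Nᴴ)^{N−j+1}`. -/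
theorem stmt7 {d N : ℕ} (hN : 2 ≤ N) (W : ℕ → Matrix (Fin d) (Fin d) ℂ)
    (hbal : ∀ j, 1 ≤ j → j ≤ N - 1 → W j * (W j)ᴴ = (W (j + 1))ᴴ * W (j + 1)) :
    ∀ j, 1 ≤ j → j ≤ N →
      prodFrom W j N * (prodFrom W j N)ᴴ = (W N * (W N)ᴴ) ^ (N - j + 1) := by
  intro j hj1 hjN
  have aux : ∀ m, j + m ≤ N →
      prodFrom W j N * (prodFrom W j N)ᴴ =
        prodFrom W (j + m) N * ((W (j + m))ᴴ * W (j + m)) ^ m * (prodFrom W (j + m) N)ᴴ := by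
    intro m
    induction m with
    | zero => intro _; simp
    | succ n ih =>
        intro hle
        have hle' : j + n ≤ N := by omega
        rw [ih hle']
        set k := j + n with hk
        have hkN : k ≤ N := by omega
        have hsplit := prodFrom_succ W (j := k) (N := N) (by omega)
        rw [hsplit]
        have hconj : (prodFrom W (k + 1) N * W k)ᴴ = (W k)ᴴ * (prodFrom W (k + 1) N)ᴴ :=
          conjTranspose_mul _ _
        rw [hconj]
        have hkey : W k * ((W k)ᴴ * W k) ^ n * (W k)ᴴ = ((W (k + 1))ᴴ * W (k + 1)) ^ (n + 1) := by
          rw [sandwich_pow, hbal k (by omega) (by omega)]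
        calc prodFrom W (k + 1) N * W k * ((W k)ᴴ * W k) ^ n *
              ((W k)ᴴ * (prodFrom W (k + 1) N)ᴴ)
            = prodFrom W (k + 1) N * (W k * ((W k)ᴴ * W k) ^ n * (W k)ᴴ) *
              (prodFrom W (k + 1) N)ᴴ := by
              simp only [mul_assoc]
          _ = prodFrom W (k + 1) N * ((W (k + 1))ᴴ * W (k + 1)) ^ (n + 1) *
              (prodFrom W (k + 1) N)ᴴ := by rw [hkey]
          _ = _ := by rw [show k + 1 = j + (n + 1) by omega]
  have hm : j + (N - j) = N := by omega
  have := aux (N - j) (by omega)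
  rw [hm] at this
  rw [this, prodFrom_self]
  exact sandwich_pow (W N) ((W N)ᴴ) (N - j)
end

section
/- Let Σ and S be d×d positive semi-definite Hermitian matrices and let 0 ≤ α ≤ (1/6)‖S‖_op⁻¹ (with S ≠ 0). Define S' = (I + α(Σ − S)) S (I + α(Σ − S)). Then λ_max(S') ≤ λ_max(S) (1 + α(λ_max(Σ) − λ_max(S)))². -/
/-!
With `B = 1 + α(Σ - S)` we have `S' = (√S B)⋆ (√S B)`, so `λ_max(S') ≤ ‖S'‖ = ‖√S B‖²`.
Split `√S B = √S (1 - αS) + α √S Σ`. The first summand has squared norm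
`‖(1 - αS) S (1 - αS)‖ = max_{x ∈ σ(S)} x (1 - αx)² = ‖S‖ (1 - α‖S‖)²`, because `x ↦ x (1 - αx)²`
is nondecreasing on `[0, 1/(3α)]`; the second has norm at most `α √‖S‖ ‖Σ‖`. Finally
`λ_max = ‖·‖` for positive semidefinite matrices.
-/

open Matrix
open scoped ComplexOrder

open scoped Matrix.Norms.L2Operator MatrixOrder
open IsometricContinuousFunctionalCalculus

lemma mul_one_sub_mul_sq_le {α s t : ℝ} (hα : 0 ≤ α) (hs : 0 ≤ s) (hst : s ≤ t)
    (ht : α * t ≤ 1 / 3) : s * (1 - α * s) ^ 2 ≤ t * (1 - α * t) ^ 2 := by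
  have hu : 0 ≤ α * s := mul_nonneg hα hs
  have huv : α * s ≤ α * t := mul_le_mul_of_nonneg_left hst hα
  -- `t(1 - αt)² - s(1 - αs)²` is `t - s` times this factor
  have key : 0 ≤ 1 - 2 * (α * s + α * t) + ((α * s) ^ 2 + α * s * (α * t) + (α * t) ^ 2) := by
    nlinarith
  nlinarith [mul_nonneg (sub_nonneg.2 hst) key]

section CStarAlgebra

variable {A : Type*} [CStarAlgebra A]

lemma norm_le_sqrt_of_norm_star_mul_self_le {x : A} {c : ℝ} (h : ‖star x * x‖ ≤ c) :
    ‖x‖ ≤ √c :=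
  Real.le_sqrt_of_sq_le (by rwa [sq, ← CStarRing.norm_star_mul_self])

variable [PartialOrder A] [StarOrderedRing A]

lemma norm_one_sub_smul_mul_mul_one_sub_smul_le {a : A} (ha : 0 ≤ a) {α : ℝ} (hα0 : 0 ≤ α)
    (hα : α * ‖a‖ ≤ 1 / 3) :
    ‖(1 - (α : ℂ) • a) * a * (1 - (α : ℂ) • a)‖ ≤ ‖a‖ * (1 - α * ‖a‖) ^ 2 := by
  have hcfc : (1 - (α : ℂ) • a) * a * (1 - (α : ℂ) • a) =
      cfc (fun x : ℝ ↦ (1 - α * x) * x * (1 - α * x)) a := by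
    rw [cfc_mul .., cfc_mul .., cfc_sub .., cfc_const_mul .., cfc_const_one .., cfc_id' ..,
      Complex.coe_smul]
  rw [hcfc]
  refine norm_cfc_le (by positivity) fun x hx ↦ ?_
  have hx0 : 0 ≤ x := spectrum_nonneg_of_nonneg ha hx
  have hxa : x ≤ ‖a‖ := (le_abs_self x).trans
    (norm_spectrum_le a hx ha.isSelfAdjoint)
  calc ‖(1 - α * x) * x * (1 - α * x)‖ = x * (1 - α * x) ^ 2 := by
        rw [Real.norm_of_nonneg (by nlinarith [sq_nonneg (1 - α * x)])]; ring
    _ ≤ ‖a‖ * (1 - α * ‖a‖) ^ 2 := mul_one_sub_mul_sq_le hα0 hx0 hxa hα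

lemma norm_conj_one_add_smul_sub_le {a t : A} (ha : 0 ≤ a) (ht : IsSelfAdjoint t) {α : ℝ}
    (hα0 : 0 ≤ α) (hα : α * ‖a‖ ≤ 1 / 3) :
    ‖(1 + (α : ℂ) • (t - a)) * a * (1 + (α : ℂ) • (t - a))‖ ≤
      ‖a‖ * (1 + α * (‖t‖ - ‖a‖)) ^ 2 := by
  set p := CFC.sqrt a
  set b := 1 + (α : ℂ) • (t - a)
  have hp : star p = p := (CFC.sqrt_nonneg a).isSelfAdjoint
  have hb : star b = b := by simp [b, ht.star_eq, ha.isSelfAdjoint.star_eq]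
  have hconj : b * a * b = star (p * b) * (p * b) := by
    rw [star_mul, hb, hp, ← CFC.sqrt_mul_sqrt_self a]
    simp only [mul_assoc]; rfl
  have hsplit : p * b = p * (1 - (α : ℂ) • a) + (α : ℂ) • (p * t) := by
    simp only [b, mul_add, mul_sub, mul_one, mul_smul_comm, smul_sub]; abel
  have hdamped : ‖p * (1 - (α : ℂ) • a)‖ ≤ √‖a‖ * (1 - α * ‖a‖) := by
    have hx : star (p * (1 - (α : ℂ) • a)) * (p * (1 - (α : ℂ) • a)) =
        (1 - (α : ℂ) • a) * a * (1 - (α : ℂ) • a) := by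
      rw [star_mul, hp, star_sub, star_one, star_smul, ha.isSelfAdjoint.star_eq,
        Complex.star_def, Complex.conj_ofReal, mul_assoc, ← mul_assoc p p,
        CFC.sqrt_mul_sqrt_self a, ← mul_assoc]
    have h := norm_one_sub_smul_mul_mul_one_sub_smul_le ha hα0 hα
    rw [← hx] at h
    refine (norm_le_sqrt_of_norm_star_mul_self_le h).trans_eq ?_
    rw [Real.sqrt_mul (norm_nonneg a), Real.sqrt_sq (by linarith)]
  have hpb : ‖p * b‖ ≤ √‖a‖ * (1 + α * (‖t‖ - ‖a‖)) :=
    calc ‖p * b‖ ≤ ‖p * (1 - (α : ℂ) • a)‖ + α * (‖p‖ * ‖t‖) := by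
          rw [hsplit]
          refine (norm_add_le _ _).trans ?_
          rw [norm_smul, Complex.norm_real, Real.norm_of_nonneg hα0]
          gcongr
          exact norm_mul_le _ _
      _ ≤ √‖a‖ * (1 - α * ‖a‖) + α * (√‖a‖ * ‖t‖) := by
          rw [CFC.norm_sqrt a]; gcongr
      _ = √‖a‖ * (1 + α * (‖t‖ - ‖a‖)) := by ring
  have hβ : 0 ≤ 1 + α * (‖t‖ - ‖a‖) := by nlinarith [norm_nonneg t]
  calc ‖b * a * b‖ = ‖p * b‖ ^ 2 := by rw [hconj, CStarRing.norm_star_mul_self, sq]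
    _ ≤ (√‖a‖ * (1 + α * (‖t‖ - ‖a‖))) ^ 2 := by gcongr
    _ = ‖a‖ * (1 + α * (‖t‖ - ‖a‖)) ^ 2 := by
        rw [mul_pow, Real.sq_sqrt (norm_nonneg a)]

end CStarAlgebra

namespace Matrix

variable {n : Type*} [Fintype n] [DecidableEq n] {A : Matrix n n ℂ}

lemma IsHermitian.iSup_eigenvalues_le_norm (hA : A.IsHermitian) : ⨆ i, hA.eigenvalues i ≤ ‖A‖ :=
  Real.iSup_le (fun i ↦ (le_abs_self _).trans <|
    norm_spectrum_le A (hA.eigenvalues_mem_spectrum_real i) hA.isSelfAdjoint) (norm_nonneg A)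

lemma PosSemidef.iSup_eigenvalues_eq_norm (hA : A.PosSemidef) :
    ⨆ i, hA.1.eigenvalues i = ‖A‖ := by
  refine le_antisymm hA.1.iSup_eigenvalues_le_norm ?_
  cases subsingleton_or_nontrivial (Matrix n n ℂ)
  · exact (norm_le_zero_iff.2 (Subsingleton.elim A 0)).trans
      (Real.iSup_nonneg hA.eigenvalues_nonneg)
  obtain ⟨x, hx, hxA⟩ := (isGreatest_norm_spectrum (𝕜 := ℝ) A hA.1.isSelfAdjoint).1
  obtain ⟨i, rfl⟩ := hA.1.spectrum_real_eq_range_eigenvalues ▸ hx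
  dsimp only at hxA
  rw [← hxA, Real.norm_of_nonneg (hA.eigenvalues_nonneg i)]
  exact le_ciSup (Set.finite_range _).bddAbove i

end Matrix

theorem stmt9_general {d : ℕ} (T S : Matrix (Fin d) (Fin d) ℂ)
    (hT : T.PosSemidef) (hS : S.PosSemidef)
    (α : ℝ) (hα0 : 0 ≤ α) (hα : α ≤ (1 / 6) * (opNorm S)⁻¹)
    (hS' : ((1 + (α : ℂ) • (T - S)) * S * (1 + (α : ℂ) • (T - S))).IsHermitian) :
    (⨆ k, hS'.eigenvalues k) ≤
      (⨆ k, hS.1.eigenvalues k) *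
        (1 + α * ((⨆ k, hT.1.eigenvalues k) - (⨆ k, hS.1.eigenvalues k))) ^ 2 := by
  -- `opNorm S` is definitionally `‖S‖` for the L2 operator norm on matrices
  have hαS : α * ‖S‖ ≤ 1 / 3 :=
    calc α * ‖S‖ ≤ 1 / 6 * (‖S‖⁻¹ * ‖S‖) := by
          rw [← mul_assoc]; exact mul_le_mul_of_nonneg_right hα (norm_nonneg S)
      _ ≤ 1 / 3 := by linarith [inv_mul_le_one (a := ‖S‖)]
  rw [hS.iSup_eigenvalues_eq_norm, hT.iSup_eigenvalues_eq_norm]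
  exact hS'.iSup_eigenvalues_le_norm.trans
    (norm_conj_one_add_smul_sub_le hS.nonneg hT.1.isSelfAdjoint hα0 hαS)

/-- Let `T` (the target `Σ`) and `S` be PSD Hermitian matrices and `0 ≤ α ≤ (1/6)‖S‖_op⁻¹`
with `S ≠ 0`. For `S' = (I + α(T − S)) S (I + α(T − S))`,
`λ_max(S') ≤ λ_max(S) (1 + α(λ_max(T) − λ_max(S)))²`. -/
theorem stmt9 {d : ℕ} (T S : Matrix (Fin d) (Fin d) ℂ)
    (hT : T.PosSemidef) (hS : S.PosSemidef) (hS0 : S ≠ 0)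
    (α : ℝ) (hα0 : 0 ≤ α) (hα : α ≤ (1 / 6) * (opNorm S)⁻¹)
    (hS' : ((1 + (α : ℂ) • (T - S)) * S * (1 + (α : ℂ) • (T - S))).IsHermitian) :
    (⨆ k, hS'.eigenvalues k) ≤
      (⨆ k, hS.1.eigenvalues k) *
        (1 + α * ((⨆ k, hT.1.eigenvalues k) - (⨆ k, hS.1.eigenvalues k))) ^ 2 :=
  stmt9_general T S hT hS α hα0 hα hS'
end

section
/- Let Σ_w be a d×d positive semi-definite diagonal matrix with diagonal entries σ_1, …, σ_d, and let Q be any d×d complex matrix. Then for every even N ≥ 2, Re(tr(Σ_w^{2j} (Q − Qᴴ) Σ_w^{N−2j} Qᴴ)) summed over j = 1, …, N/2 − 1 equals (1/2) Σ_{m,n} |Q_{mn} − conj(Q_{nm})|² · (Σ_{j=1}^{N/2−1} σ_m^{2j} σ_n^{N−2j}), and in particular this quantity is nonnegative. -/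
/-! Since `Σ_w` is diagonal, the `j`-th trace is
`∑ m n, σ_m^{2j} σ_n^{N-2j} (Q - Qᴴ)_{mn} conj Q_{mn}`.
The total weight `∑_j σ_m^{2j} σ_n^{N-2j}` is symmetric in `(m, n)` (reflect `j ↦ N/2 - j`), so
averaging the terms `(m, n)` and `(n, m)` turns `Re ((Q_{mn} - conj Q_{nm}) conj Q_{mn})` into
`|Q_{mn} - conj Q_{nm}|² / 2`. -/

open Matrix

theorem RCLike.re_sub_star_mul_star_add_re_sub_star_mul_star {𝕜 : Type*} [RCLike 𝕜] (a b : 𝕜) :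
    re ((a - star b) * star a) + re ((b - star a) * star b) = ‖a - star b‖ ^ 2 := by
  set z := a - star b
  have hz : b - star a = -star z := by simp [z]
  calc re (z * star a) + re ((b - star a) * star b)
      = re (z * star a) - re (star (z * b)) := by
        rw [hz, star_mul', mul_comm]; simp [sub_eq_add_neg]
    _ = re (z * star z) := by rw [RCLike.star_def, RCLike.conj_re, ← map_sub, ← mul_sub]; simp [z]
    _ = ‖z‖ ^ 2 := by rw [RCLike.star_def, RCLike.mul_conj, ← RCLike.ofReal_pow, RCLike.ofReal_re]

theorem Matrix.re_sum_mul_sub_conjTranspose_mul_star {ι 𝕜 : Type*} [Fintype ι] [RCLike 𝕜]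
    (w : ι → ι → ℝ) (hw : ∀ m n, w m n = w n m) (A : Matrix ι ι 𝕜) :
    RCLike.re (∑ m, ∑ n, (w m n : 𝕜) * ((A - Aᴴ) m n * star (A m n)))
      = 1 / 2 * ∑ m, ∑ n, ‖A m n - star (A n m)‖ ^ 2 * w m n := by
  set f : ι → ι → ℝ := fun m n => RCLike.re ((A m n - star (A n m)) * star (A m n))
  have hre : RCLike.re (∑ m, ∑ n, (w m n : 𝕜) * ((A - Aᴴ) m n * star (A m n)))
      = ∑ m, ∑ n, w m n * f m n := by
    simp only [map_sum, RCLike.re_ofReal_mul, sub_apply, conjTranspose_apply, f]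
  have hswap : ∑ m, ∑ n, w m n * f m n = ∑ m, ∑ n, w m n * f n m := by
    rw [Finset.sum_comm]
    simp only [hw]
  have hpair : ∀ m n, f m n + f n m = ‖A m n - star (A n m)‖ ^ 2 := fun m n =>
    RCLike.re_sub_star_mul_star_add_re_sub_star_mul_star (A m n) (A n m)
  have htwice : 2 * ∑ m, ∑ n, w m n * f m n = ∑ m, ∑ n, ‖A m n - star (A n m)‖ ^ 2 * w m n := by
    rw [two_mul]
    nth_rewrite 2 [hswap]
    simp only [← Finset.sum_add_distrib, ← mul_add, hpair, mul_comm]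
  rw [hre, ← htwice]
  ring

theorem Finset.sum_Ico_pow_mul_pow_comm {R : Type*} [CommSemiring R] {N : ℕ} (hN : Even N)
    (x y : R) :
    ∑ j ∈ Ico 1 (N / 2), x ^ (2 * j) * y ^ (N - 2 * j)
      = ∑ j ∈ Ico 1 (N / 2), y ^ (2 * j) * x ^ (N - 2 * j) := by
  have hN2 : 2 * (N / 2) = N := Nat.two_mul_div_two_of_even hN
  refine sum_nbij' (N / 2 - ·) (N / 2 - ·) ?_ ?_ ?_ ?_ ?_ <;> simp only [mem_Ico] <;> intro j hj
  any_goals omega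
  rw [mul_comm, show 2 * (N / 2 - j) = N - 2 * j by omega, show N - (N - 2 * j) = 2 * j by omega]

theorem Matrix.trace_diagonal_mul_mul_diagonal_mul_conjTranspose {ι R : Type*} [Fintype ι]
    [DecidableEq ι] [CommSemiring R] [StarRing R] (a b : ι → R) (A B : Matrix ι ι R) :
    (diagonal a * A * diagonal b * Bᴴ).trace = ∑ m, ∑ n, a m * b n * (A m n * star (B m n)) := by
  simp only [trace, diag, mul_apply, diagonal_apply, conjTranspose_apply, ite_mul, mul_ite,
    zero_mul, mul_zero, Finset.sum_ite_eq, Finset.sum_ite_eq', Finset.mem_univ, if_true]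
  refine Finset.sum_congr rfl fun m _ => Finset.sum_congr rfl fun n _ => ?_
  ring

theorem stmt14_general {d : ℕ} (N : ℕ) (hNe : Even N)
    (σ : Fin d → ℝ) (hσ : ∀ k, 0 ≤ σ k) (Q : Matrix (Fin d) (Fin d) ℂ) :
    (∑ j ∈ Finset.Ico 1 (N / 2),
        (((Matrix.diagonal fun k => ((σ k : ℝ) : ℂ)) ^ (2 * j) * (Q - Qᴴ) *
            (Matrix.diagonal fun k => ((σ k : ℝ) : ℂ)) ^ (N - 2 * j) * Qᴴ).trace).re
      = (1 / 2 : ℝ) * ∑ m, ∑ n, ‖Q m n - star (Q n m)‖ ^ 2 *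
          ∑ j ∈ Finset.Ico 1 (N / 2), σ m ^ (2 * j) * σ n ^ (N - 2 * j)) ∧
    0 ≤ ∑ j ∈ Finset.Ico 1 (N / 2),
        (((Matrix.diagonal fun k => ((σ k : ℝ) : ℂ)) ^ (2 * j) * (Q - Qᴴ) *
            (Matrix.diagonal fun k => ((σ k : ℝ) : ℂ)) ^ (N - 2 * j) * Qᴴ).trace).re := by
  set w : Fin d → Fin d → ℝ :=
    fun m n => ∑ j ∈ Finset.Ico 1 (N / 2), σ m ^ (2 * j) * σ n ^ (N - 2 * j)
  have hpow (p : ℕ) :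
      (diagonal fun k => ((σ k : ℝ) : ℂ)) ^ p = diagonal fun k => ((σ k ^ p : ℝ) : ℂ) := by
    simp [diagonal_pow, Pi.pow_def]
  have htrace : ∑ j ∈ Finset.Ico 1 (N / 2),
        (((diagonal fun k => ((σ k : ℝ) : ℂ)) ^ (2 * j) * (Q - Qᴴ) *
            (diagonal fun k => ((σ k : ℝ) : ℂ)) ^ (N - 2 * j) * Qᴴ).trace).re
      = RCLike.re (∑ m, ∑ n, (w m n : ℂ) * ((Q - Qᴴ) m n * star (Q m n))) := by
    simp only [hpow, trace_diagonal_mul_mul_diagonal_mul_conjTranspose, ← Complex.re_sum, w]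
    rw [RCLike.re_to_complex, Finset.sum_comm]
    refine congrArg Complex.re <| Finset.sum_congr rfl fun m _ => ?_
    rw [Finset.sum_comm]
    refine Finset.sum_congr rfl fun n _ => ?_
    push_cast
    rw [Finset.sum_mul]
  have heq := htrace.trans <| re_sum_mul_sub_conjTranspose_mul_star w
    (fun m n => Finset.sum_Ico_pow_mul_pow_comm hNe (σ m) (σ n)) Q
  refine ⟨heq, heq ▸ ?_⟩
  exact mul_nonneg (by norm_num) <| Finset.sum_nonneg fun m _ => Finset.sum_nonneg fun n _ =>
    mul_nonneg (sq_nonneg _) <| Finset.sum_nonneg fun j _ =>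
      mul_nonneg (pow_nonneg (hσ m) _) (pow_nonneg (hσ n) _)

/-- For a PSD diagonal matrix `Σ_w = diag(σ₁, …, σ_d)`, any matrix `Q`, and even `N ≥ 2`:
`Σ_{j=1}^{N/2−1} Re tr(Σ_w^{2j} (Q − Qᴴ) Σ_w^{N−2j} Qᴴ)
  = (1/2) Σ_{m,n} |Q_{mn} − conj(Q_{nm})|² Σ_{j=1}^{N/2−1} σ_m^{2j} σ_n^{N−2j} ≥ 0`. -/
theorem stmt14 {d : ℕ} (N : ℕ) (hN : 2 ≤ N) (hNe : Even N)
    (σ : Fin d → ℝ) (hσ : ∀ k, 0 ≤ σ k) (Q : Matrix (Fin d) (Fin d) ℂ) :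
    (∑ j ∈ Finset.Ico 1 (N / 2),
        (((Matrix.diagonal fun k => ((σ k : ℝ) : ℂ)) ^ (2 * j) * (Q - Qᴴ) *
            (Matrix.diagonal fun k => ((σ k : ℝ) : ℂ)) ^ (N - 2 * j) * Qᴴ).trace).re
      = (1 / 2 : ℝ) * ∑ m, ∑ n, ‖Q m n - star (Q n m)‖ ^ 2 *
          ∑ j ∈ Finset.Ico 1 (N / 2), σ m ^ (2 * j) * σ n ^ (N - 2 * j)) ∧
    0 ≤ ∑ j ∈ Finset.Ico 1 (N / 2),
        (((Matrix.diagonal fun k => ((σ k : ℝ) : ℂ)) ^ (2 * j) * (Q - Qᴴ) *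
            (Matrix.diagonal fun k => ((σ k : ℝ) : ℂ)) ^ (N - 2 * j) * Qᴴ).trace).re :=
  stmt14_general N hNe σ hσ Q
end

section
/- Suppose W_1, …, W_N are d×d invertible matrices with singular values bounded as δ ≤ σ_min(W_j) and σ_max(W_j) ≤ M for all j, with 0 < δ < M. Let Δ_{j,j+1} = W_j W_jᴴ − W_{j+1}ᴴ W_{j+1} for 1 ≤ j ≤ N−1, Δ_{0,1} = Δ_{N,N+1} = 0, and D_j = Δ_{j,j+1} W_j − W_j Δ_{j−1,j} for 1 ≤ j ≤ N. Then Σ_{j=1}^{N−1} ‖Δ_{j,j+1}‖_F² ≤ ((N−1)/2) · ((M/δ)^{2⌊N/2⌋} − 1)/(M² − δ²) · Σ_{j=1}^{N} ‖D_j‖_F². -/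
open Matrix
open scoped ComplexOrder

/-- The smallest singular value of a square complex matrix. -/
noncomputable def sigmaMin {d : ℕ} (A : Matrix (Fin d) (Fin d) ℂ) : ℝ :=
  ⨅ k, Real.sqrt ((Matrix.isHermitian_mul_conjTranspose_self A).eigenvalues k)

/-- The largest singular value of a square complex matrix. -/
noncomputable def sigmaMax {d : ℕ} (A : Matrix (Fin d) (Fin d) ℂ) : ℝ :=
  ⨆ k, Real.sqrt ((Matrix.isHermitian_mul_conjTranspose_self A).eigenvalues k)

/-- The Frobenius norm of a complex matrix. -/
noncomputable def frobNorm {d : ℕ} (A : Matrix (Fin d) (Fin d) ℂ) : ℝ :=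
  Real.sqrt (∑ i, ∑ j, ‖A i j‖ ^ 2)

/-- The balance error `Δ_{j,j+1} = W_j W_jᴴ − W_{j+1}ᴴ W_{j+1}` for `1 ≤ j ≤ N−1`, and `0`
otherwise (so `Δ_{0,1} = Δ_{N,N+1} = 0`). -/
noncomputable def Δbal {d : ℕ} (W : ℕ → Matrix (Fin d) (Fin d) ℂ) (N j : ℕ) :
    Matrix (Fin d) (Fin d) ℂ :=
  if 1 ≤ j ∧ j ≤ N - 1 then W j * (W j)ᴴ - (W (j + 1))ᴴ * W (j + 1) else 0

/-!
Write `a_j = ‖Δ_{j,j+1}‖_F` and `b_j = ‖D_j‖_F`. The singular value bounds say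
`δ² ≤ W Wᴴ ≤ M²` in the Loewner order, and the same holds for `Wᴴ W`, which has the same
spectrum; hence multiplying by `W_j` on either side scales Frobenius norms by a factor in
`[δ, M]`. Reading `D_j = Δ_{j,j+1} W_j − W_j Δ_{j−1,j}` once for each of its two terms gives
`δ a_j ≤ b_j + M a_{j−1}` and `δ a_{j−1} ≤ b_j + M a_j`. Starting from `a_0 = 0`, resp.
`a_N = 0`, and applying Cauchy–Schwarz to two terms at each step gives
`a_j² ≤ K_j Σ_{k ≤ j} b_k²` and `a_j² ≤ K_{N−j} Σ_{k > j} b_k²`, where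
`K_m = ((M/δ)^{2m} − 1)/(M² − δ²)` is the solution of `K_0 = 0`, `K_{m+1} = (1 + M² K_m)/δ²`.
For `2j ≤ N`, the forward bound for `a_j` and the backward bound for `a_{N−j}` both carry the
constant `K_j ≤ K_{⌊N/2⌋}` and draw on disjoint parts of `Σ_k b_k²`; summing over the pairs
`{j, N − j}` gives the factor `(N − 1)/2`.
-/

open scoped MatrixOrder

namespace Matrix
variable {n m : Type*} [Fintype n] [DecidableEq n] [Fintype m] {H : Matrix n n ℂ} {c : ℝ}

lemma IsHermitian.le_algebraMap_of_eigenvalues_le (hH : H.IsHermitian)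
    (h : ∀ k, hH.eigenvalues k ≤ c) : H ≤ algebraMap ℝ _ c :=
  le_algebraMap_of_spectrum_le (by simpa [hH.spectrum_real_eq_range_eigenvalues] using h)
    hH.isSelfAdjoint

lemma IsHermitian.algebraMap_le_of_le_eigenvalues (hH : H.IsHermitian)
    (h : ∀ k, c ≤ hH.eigenvalues k) : algebraMap ℝ _ c ≤ H :=
  algebraMap_le_of_le_spectrum (by simpa [hH.spectrum_real_eq_range_eigenvalues] using h)
    hH.isSelfAdjoint

lemma re_trace_conjTranspose_mul_mul_le (h : H ≤ algebraMap ℝ _ c) (A : Matrix n m ℂ) :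
    (Aᴴ * H * A).trace.re ≤ c * (Aᴴ * A).trace.re := by
  have := ((le_iff.mp h).conjTranspose_mul_mul_same A).trace_nonneg
  rw [Matrix.mul_sub, Matrix.sub_mul, trace_sub, Algebra.algebraMap_eq_smul_one] at this
  simpa using (Complex.le_def.mp this).1

lemma le_re_trace_conjTranspose_mul_mul (h : algebraMap ℝ _ c ≤ H) (A : Matrix n m ℂ) :
    c * (Aᴴ * A).trace.re ≤ (Aᴴ * H * A).trace.re := by
  have := ((le_iff.mp h).conjTranspose_mul_mul_same A).trace_nonneg
  rw [Matrix.mul_sub, Matrix.sub_mul, trace_sub, Algebra.algebraMap_eq_smul_one] at this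
  simpa using (Complex.le_def.mp this).1

end Matrix

section frobNorm
variable {d : ℕ}

lemma frobNorm_nonneg (A : Matrix (Fin d) (Fin d) ℂ) : 0 ≤ frobNorm A := Real.sqrt_nonneg _

lemma frobNorm_zero : frobNorm (0 : Matrix (Fin d) (Fin d) ℂ) = 0 := by simp [frobNorm]

lemma frobNorm_sq (A : Matrix (Fin d) (Fin d) ℂ) : frobNorm A ^ 2 = (Aᴴ * A).trace.re := by
  rw [frobNorm, Real.sq_sqrt (by positivity), Finset.sum_comm]
  simp [trace, mul_apply, Complex.re_sum, ← Complex.normSq_eq_norm_sq, Complex.normSq_apply]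

lemma frobNorm_conjTranspose (A : Matrix (Fin d) (Fin d) ℂ) : frobNorm Aᴴ = frobNorm A := by
  rw [frobNorm, frobNorm, Finset.sum_comm]
  simp

lemma frobNorm_mul_sq (B A : Matrix (Fin d) (Fin d) ℂ) :
    frobNorm (B * A) ^ 2 = (Aᴴ * (Bᴴ * B) * A).trace.re := by
  rw [frobNorm_sq, conjTranspose_mul, Matrix.mul_assoc, Matrix.mul_assoc, Matrix.mul_assoc]

variable {B : Matrix (Fin d) (Fin d) ℂ} {c : ℝ}

lemma frobNorm_mul_le_of_conjTranspose_mul_self_le (hc : 0 ≤ c)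
    (h : Bᴴ * B ≤ algebraMap ℝ _ (c ^ 2)) (A : Matrix (Fin d) (Fin d) ℂ) :
    frobNorm (B * A) ≤ c * frobNorm A := by
  refine le_of_pow_le_pow_left₀ two_ne_zero (by have := frobNorm_nonneg A; positivity) ?_
  rw [frobNorm_mul_sq, mul_pow, frobNorm_sq]
  exact re_trace_conjTranspose_mul_mul_le h A

lemma le_frobNorm_mul_of_le_conjTranspose_mul_self
    (h : algebraMap ℝ _ (c ^ 2) ≤ Bᴴ * B) (A : Matrix (Fin d) (Fin d) ℂ) :
    c * frobNorm A ≤ frobNorm (B * A) := by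
  refine le_of_pow_le_pow_left₀ two_ne_zero (frobNorm_nonneg _) ?_
  rw [frobNorm_mul_sq, mul_pow, frobNorm_sq]
  exact le_re_trace_conjTranspose_mul_mul h A

lemma frobNorm_mul_le_of_mul_conjTranspose_self_le (hc : 0 ≤ c)
    (h : B * Bᴴ ≤ algebraMap ℝ _ (c ^ 2)) (A : Matrix (Fin d) (Fin d) ℂ) :
    frobNorm (A * B) ≤ c * frobNorm A := by
  rw [← frobNorm_conjTranspose (A * B), conjTranspose_mul, ← frobNorm_conjTranspose A]
  exact frobNorm_mul_le_of_conjTranspose_mul_self_le hc (by rwa [conjTranspose_conjTranspose]) _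

lemma le_frobNorm_mul_of_le_mul_conjTranspose_self
    (h : algebraMap ℝ _ (c ^ 2) ≤ B * Bᴴ) (A : Matrix (Fin d) (Fin d) ℂ) :
    c * frobNorm A ≤ frobNorm (A * B) := by
  rw [← frobNorm_conjTranspose (A * B), conjTranspose_mul, ← frobNorm_conjTranspose A]
  exact le_frobNorm_mul_of_le_conjTranspose_mul_self (by rwa [conjTranspose_conjTranspose]) _

section triangle
attribute [local instance] Matrix.frobeniusSeminormedAddCommGroup

lemma frobNorm_eq_norm (A : Matrix (Fin d) (Fin d) ℂ) : frobNorm A = ‖A‖ := by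
  simp [frobenius_norm_def, frobNorm, Real.sqrt_eq_rpow]

lemma frobNorm_add_le (A B : Matrix (Fin d) (Fin d) ℂ) :
    frobNorm (A + B) ≤ frobNorm A + frobNorm B := by
  simpa only [frobNorm_eq_norm] using norm_add_le A B

lemma frobNorm_sub_le (A B : Matrix (Fin d) (Fin d) ℂ) :
    frobNorm (A - B) ≤ frobNorm A + frobNorm B := by
  simpa only [frobNorm_eq_norm] using norm_sub_le A B

end triangle

end frobNorm

section singularValues
variable {d : ℕ} {W : Matrix (Fin d) (Fin d) ℂ} {δ M : ℝ}

lemma eigenvalues_conjTranspose_mul_self_eq :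
    (isHermitian_conjTranspose_mul_self W).eigenvalues =
      (isHermitian_mul_conjTranspose_self W).eigenvalues :=
  (IsHermitian.eigenvalues_eq_eigenvalues_iff _ _).mpr (charpoly_mul_comm _ _)

lemma sq_le_eigenvalues_of_le_sigmaMin (hδ : 0 ≤ δ) (h : δ ≤ sigmaMin W) (k : Fin d) :
    δ ^ 2 ≤ (isHermitian_mul_conjTranspose_self W).eigenvalues k :=
  (Real.le_sqrt hδ (eigenvalues_self_mul_conjTranspose_nonneg W k)).mp
    (h.trans (ciInf_le (Finite.bddBelow_range _) k))

lemma eigenvalues_le_sq_of_sigmaMax_le (hM : 0 ≤ M) (h : sigmaMax W ≤ M) (k : Fin d) :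
    (isHermitian_mul_conjTranspose_self W).eigenvalues k ≤ M ^ 2 :=
  (Real.sqrt_le_left hM).mp ((le_ciSup (Finite.bddAbove_range _) k).trans h)

lemma frobNorm_mul_le_of_sigmaMax_le (hM : 0 ≤ M) (h : sigmaMax W ≤ M)
    (A : Matrix (Fin d) (Fin d) ℂ) : frobNorm (W * A) ≤ M * frobNorm A :=
  frobNorm_mul_le_of_conjTranspose_mul_self_le hM
    ((isHermitian_conjTranspose_mul_self W).le_algebraMap_of_eigenvalues_le fun k => by
      rw [eigenvalues_conjTranspose_mul_self_eq]; exact eigenvalues_le_sq_of_sigmaMax_le hM h k) A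

lemma frobNorm_mul_right_le_of_sigmaMax_le (hM : 0 ≤ M) (h : sigmaMax W ≤ M)
    (A : Matrix (Fin d) (Fin d) ℂ) : frobNorm (A * W) ≤ M * frobNorm A :=
  frobNorm_mul_le_of_mul_conjTranspose_self_le hM
    ((isHermitian_mul_conjTranspose_self W).le_algebraMap_of_eigenvalues_le
      (eigenvalues_le_sq_of_sigmaMax_le hM h)) A

lemma le_frobNorm_mul_of_le_sigmaMin (hδ : 0 ≤ δ) (h : δ ≤ sigmaMin W)
    (A : Matrix (Fin d) (Fin d) ℂ) : δ * frobNorm A ≤ frobNorm (W * A) :=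
  le_frobNorm_mul_of_le_conjTranspose_mul_self
    ((isHermitian_conjTranspose_mul_self W).algebraMap_le_of_le_eigenvalues fun k => by
      rw [eigenvalues_conjTranspose_mul_self_eq]; exact sq_le_eigenvalues_of_le_sigmaMin hδ h k) A

lemma le_frobNorm_mul_right_of_le_sigmaMin (hδ : 0 ≤ δ) (h : δ ≤ sigmaMin W)
    (A : Matrix (Fin d) (Fin d) ℂ) : δ * frobNorm A ≤ frobNorm (A * W) :=
  le_frobNorm_mul_of_le_mul_conjTranspose_self
    ((isHermitian_mul_conjTranspose_self W).algebraMap_le_of_le_eigenvalues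
      (sq_le_eigenvalues_of_le_sigmaMin hδ h)) A

lemma mul_frobNorm_le_intertwining_left (hδ : 0 ≤ δ) (hM : 0 ≤ M) (hmin : δ ≤ sigmaMin W)
    (hmax : sigmaMax W ≤ M) (X Y : Matrix (Fin d) (Fin d) ℂ) :
    δ * frobNorm X ≤ frobNorm (X * W - W * Y) + M * frobNorm Y :=
  calc δ * frobNorm X ≤ frobNorm (X * W) := le_frobNorm_mul_right_of_le_sigmaMin hδ hmin X
    _ = frobNorm ((X * W - W * Y) + W * Y) := by rw [sub_add_cancel]
    _ ≤ frobNorm (X * W - W * Y) + frobNorm (W * Y) := frobNorm_add_le _ _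
    _ ≤ _ := by gcongr; exact frobNorm_mul_le_of_sigmaMax_le hM hmax Y

lemma mul_frobNorm_le_intertwining_right (hδ : 0 ≤ δ) (hM : 0 ≤ M) (hmin : δ ≤ sigmaMin W)
    (hmax : sigmaMax W ≤ M) (X Y : Matrix (Fin d) (Fin d) ℂ) :
    δ * frobNorm Y ≤ frobNorm (X * W - W * Y) + M * frobNorm X :=
  calc δ * frobNorm Y ≤ frobNorm (W * Y) := le_frobNorm_mul_of_le_sigmaMin hδ hmin Y
    _ = frobNorm (X * W - (X * W - W * Y)) := by rw [sub_sub_cancel]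
    _ ≤ frobNorm (X * W) + frobNorm (X * W - W * Y) := frobNorm_sub_le _ _
    _ ≤ _ := by rw [add_comm]; gcongr; exact frobNorm_mul_right_le_of_sigmaMax_le hM hmax X

end singularValues

open Finset

noncomputable def growthConst (δ M : ℝ) (j : ℕ) : ℝ := ((M / δ) ^ (2 * j) - 1) / (M ^ 2 - δ ^ 2)

section growthConst
variable {δ M : ℝ}

lemma growthConst_zero : growthConst δ M 0 = 0 := by simp [growthConst]

lemma growthConst_succ (hδ : 0 < δ) (hδM : δ < M) (j : ℕ) :
    growthConst δ M (j + 1) = (1 + M ^ 2 * growthConst δ M j) / δ ^ 2 := by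
  have : M ^ 2 - δ ^ 2 ≠ 0 := by nlinarith
  simp only [growthConst]
  rw [mul_add, mul_one, pow_add, div_pow M δ 2]
  field_simp
  ring

lemma monotone_growthConst (hδ : 0 < δ) (hδM : δ < M) : Monotone (growthConst δ M) := by
  have : 0 < M ^ 2 - δ ^ 2 := by nlinarith
  intro i j hij
  unfold growthConst
  gcongr
  exact (one_le_div hδ).mpr hδM.le

lemma growthConst_nonneg (hδ : 0 < δ) (hδM : δ < M) (j : ℕ) : 0 ≤ growthConst δ M j :=
  growthConst_zero (δ := δ) (M := M) ▸ monotone_growthConst hδ hδM (Nat.zero_le j)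

end growthConst

lemma sq_add_mul_le_of_sq_le_mul {a b M K S : ℝ} (hK : 0 ≤ K) (hS : 0 ≤ S) (ha : a ^ 2 ≤ K * S) :
    (b + M * a) ^ 2 ≤ (1 + M ^ 2 * K) * (b ^ 2 + S) := by
  have cross : 2 * (M * a) * b ≤ S + M ^ 2 * K * b ^ 2 := by
    rcases hK.eq_or_lt with rfl | hK
    · have : a = 0 := by nlinarith
      subst this; nlinarith
    · refine le_of_mul_le_mul_left ?_ hK
      nlinarith [sq_nonneg (M * K * b - a)]
  nlinarith [mul_le_mul_of_nonneg_left ha (sq_nonneg M)]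

section recurrence
variable {a b : ℕ → ℝ} {δ M : ℝ} {n : ℕ}

lemma sq_le_growthConst_mul_of_recurrence (hδ : 0 < δ) (hδM : δ < M) (ha : ∀ j, 0 ≤ a j)
    (h0 : a 0 = 0) (hrec : ∀ j < n, δ * a (j + 1) ≤ b (j + 1) + M * a j) :
    ∀ j ≤ n, a j ^ 2 ≤ growthConst δ M j * ∑ k ∈ Icc 1 j, b k ^ 2 := by
  intro j
  induction j with
  | zero => simp [h0, growthConst_zero]
  | succ j ih =>
    intro hj
    have hS : 0 ≤ ∑ k ∈ Icc 1 j, b k ^ 2 := sum_nonneg fun _ _ => sq_nonneg _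
    have hsq : (δ * a (j + 1)) ^ 2 ≤ (b (j + 1) + M * a j) ^ 2 :=
      pow_le_pow_left₀ (mul_nonneg hδ.le (ha _)) (hrec j hj) 2
    have hcs := sq_add_mul_le_of_sq_le_mul (b := b (j + 1)) (M := M)
      (growthConst_nonneg hδ hδM j) hS (ih (by omega))
    rw [growthConst_succ hδ hδM, sum_Icc_succ_top (by omega), div_mul_eq_mul_div,
      le_div_iff₀ (by positivity)]
    nlinarith

lemma sq_le_growthConst_mul_of_backward_recurrence (hδ : 0 < δ) (hδM : δ < M)
    (ha : ∀ j, 0 ≤ a j) (hn : a n = 0)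
    (hrec : ∀ j, 1 ≤ j → j < n → δ * a j ≤ b (j + 1) + M * a (j + 1)) :
    ∀ j, 1 ≤ j → j ≤ n → a j ^ 2 ≤ growthConst δ M (n - j) * ∑ k ∈ Icc (j + 1) n, b k ^ 2 := by
  intro j hj hjn
  have hrefl := sq_le_growthConst_mul_of_recurrence (a := fun m => a (n - m))
    (b := fun m => b (n + 1 - m)) (n := n - 1) hδ hδM (fun _ => ha _) (by simpa) (fun m hm => by
      have e₁ : n - (m + 1) + 1 = n - m := by omega
      have e₂ : n + 1 - (m + 1) = n - m := by omega
      simpa only [e₁, e₂] using hrec (n - (m + 1)) (by omega) (by omega))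
    (n - j) (by omega)
  have hsum : ∑ k ∈ Icc 1 (n - j), b (n + 1 - k) ^ 2 = ∑ k ∈ Icc (j + 1) n, b k ^ 2 := by
    rw [← Ico_add_one_right_eq_Icc, ← Ico_add_one_right_eq_Icc,
      sum_Ico_reflect (fun k => b k ^ 2) 1 (by omega)]
    congr 2; omega
  simpa only [Nat.sub_sub_self hjn, hsum] using hrefl

end recurrence

lemma sum_sq_le_of_two_sided_bounds {a b K : ℕ → ℝ} {N : ℕ} (hN : 1 ≤ N) (hK : Monotone K)
    (hK0 : ∀ j, 0 ≤ K j)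
    (hfwd : ∀ j, 1 ≤ j → j < N → a j ^ 2 ≤ K j * ∑ k ∈ Icc 1 j, b k ^ 2)
    (hbwd : ∀ j, 1 ≤ j → j < N → a j ^ 2 ≤ K (N - j) * ∑ k ∈ Icc (j + 1) N, b k ^ 2) :
    ∑ j ∈ Ico 1 N, a j ^ 2 ≤ ((N : ℝ) - 1) / 2 * K (N / 2) * ∑ k ∈ Icc 1 N, b k ^ 2 := by
  set T := ∑ k ∈ Icc 1 N, b k ^ 2
  have hpair_low : ∀ j, 1 ≤ j → 2 * j ≤ N → a j ^ 2 + a (N - j) ^ 2 ≤ K (N / 2) * T := by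
    intro j hj hjN
    have hlow := hfwd j hj (by omega)
    have hhigh := hbwd (N - j) (by omega) (by omega)
    rw [Nat.sub_sub_self (by omega)] at hhigh
    have hsplit : ∑ k ∈ Icc 1 j, b k ^ 2 + ∑ k ∈ Icc (N - j + 1) N, b k ^ 2 ≤ T := by
      rw [← sum_union (disjoint_left.mpr fun k hk hk' => by simp only [mem_Icc] at hk hk'; omega)]
      exact sum_le_sum_of_subset_of_nonneg
        (fun k hk => by simp only [mem_union, mem_Icc] at hk ⊢; omega) fun _ _ _ => sq_nonneg _
    calc a j ^ 2 + a (N - j) ^ 2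
        ≤ K j * (∑ k ∈ Icc 1 j, b k ^ 2 + ∑ k ∈ Icc (N - j + 1) N, b k ^ 2) := by
          rw [mul_add]; exact add_le_add hlow hhigh
      _ ≤ K (N / 2) * T := mul_le_mul (hK (by omega)) hsplit
          (add_nonneg (sum_nonneg fun _ _ => sq_nonneg _) (sum_nonneg fun _ _ => sq_nonneg _))
          (hK0 _)
  have hpair : ∀ j ∈ Ico 1 N, a j ^ 2 + a (N - j) ^ 2 ≤ K (N / 2) * T := by
    intro j hj
    rw [mem_Ico] at hj
    rcases le_or_gt (2 * j) N with h | h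
    · exact hpair_low j hj.1 h
    · have := hpair_low (N - j) (by omega) (by omega)
      rw [Nat.sub_sub_self hj.2.le] at this
      linarith
  have hreflect : ∑ j ∈ Ico 1 N, a (N - j) ^ 2 = ∑ j ∈ Ico 1 N, a j ^ 2 := by
    rw [sum_Ico_reflect (fun j => a j ^ 2) 1 (Nat.le_succ N), Nat.add_sub_cancel,
      Nat.add_sub_cancel_left]
  have hsum := sum_le_sum hpair
  rw [sum_add_distrib, hreflect, sum_const, Nat.card_Ico, nsmul_eq_mul, Nat.cast_sub hN,
    Nat.cast_one] at hsum
  linarith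

theorem stmt16_general {d N : ℕ} (hN : 2 ≤ N) (W : ℕ → Matrix (Fin d) (Fin d) ℂ)
    (δ M : ℝ) (hδ : 0 < δ) (hδM : δ < M)
    (hmin : ∀ j, 1 ≤ j → j ≤ N → δ ≤ sigmaMin (W j))
    (hmax : ∀ j, 1 ≤ j → j ≤ N → sigmaMax (W j) ≤ M) :
    (∑ j ∈ Finset.Ico 1 N, frobNorm (Δbal W N j) ^ 2) ≤
      ((N : ℝ) - 1) / 2 * (((M / δ) ^ (2 * (N / 2)) - 1) / (M ^ 2 - δ ^ 2)) *
        ∑ j ∈ Finset.Icc 1 N,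
          frobNorm (Δbal W N j * W j - W j * Δbal W N (j - 1)) ^ 2 := by
  have hM : 0 ≤ M := hδ.le.trans hδM.le
  have ha : ∀ j, 0 ≤ frobNorm (Δbal W N j) := fun j => frobNorm_nonneg _
  have hΔ₀ : Δbal W N 0 = 0 := if_neg (by omega)
  have hΔN : Δbal W N N = 0 := if_neg (by omega)
  let b j := frobNorm (Δbal W N j * W j - W j * Δbal W N (j - 1))
  have hfwd := sq_le_growthConst_mul_of_recurrence (b := b) (n := N - 1) hδ hδM ha
    (by rw [hΔ₀, frobNorm_zero]) fun j hj =>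
      mul_frobNorm_le_intertwining_left hδ.le hM (hmin (j + 1) (by omega) (by omega))
        (hmax (j + 1) (by omega) (by omega)) _ _
  have hbwd := sq_le_growthConst_mul_of_backward_recurrence (b := b) (n := N) hδ hδM ha
    (by rw [hΔN, frobNorm_zero]) fun j hj hjN =>
      mul_frobNorm_le_intertwining_right hδ.le hM (hmin (j + 1) (by omega) (by omega))
        (hmax (j + 1) (by omega) (by omega)) _ _
  exact sum_sq_le_of_two_sided_bounds (by omega) (monotone_growthConst hδ hδM)
    (growthConst_nonneg hδ hδM) (fun j _ hjN => hfwd j (by omega)) fun j hj hjN => hbwd j hj hjN.le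

/-- With `δ ≤ σ_min(W_j)`, `σ_max(W_j) ≤ M`, `0 < δ < M`, all `W_j` invertible, and
`D_j = Δ_{j,j+1} W_j − W_j Δ_{j−1,j}`:
`Σ_{j=1}^{N−1} ‖Δ_{j,j+1}‖_F² ≤ ((N−1)/2)((M/δ)^{2⌊N/2⌋} − 1)/(M² − δ²) Σ_{j=1}^N ‖D_j‖_F²`. -/
theorem stmt16 {d N : ℕ} (hN : 2 ≤ N) (W : ℕ → Matrix (Fin d) (Fin d) ℂ)
    (δ M : ℝ) (hδ : 0 < δ) (hδM : δ < M)
    (hinv : ∀ j, 1 ≤ j → j ≤ N → IsUnit (W j))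
    (hmin : ∀ j, 1 ≤ j → j ≤ N → δ ≤ sigmaMin (W j))
    (hmax : ∀ j, 1 ≤ j → j ≤ N → sigmaMax (W j) ≤ M) :
    (∑ j ∈ Finset.Ico 1 N, frobNorm (Δbal W N j) ^ 2) ≤
      ((N : ℝ) - 1) / 2 * (((M / δ) ^ (2 * (N / 2)) - 1) / (M ^ 2 - δ ^ 2)) *
        ∑ j ∈ Finset.Icc 1 N,
          frobNorm (Δbal W N j * W j - W j * Δbal W N (j - 1)) ^ 2 :=
  stmt16_general hN W δ M hδ hδM hmin hmax
end

section
/- Let W_1, …, W_N be d×d complex matrices, W = W_N ⋯ W_1, and suppose the balanced-regularization gradient-flow identity holds: dW_j/dt = Pᴴ_{j+1}(Σ − W)Qᴴ_{j−1} + a W_j Δ_{j−1,j} − a Δ_{j,j+1} W_j, where P_{j+1} = W_N⋯W_{j+1}, Q_{j−1} = W_{j−1}⋯W_1, Δ_{j,j+1} = W_j W_jᴴ − W_{j+1}ᴴ W_{j+1} for 1 ≤ j ≤ N−1 and Δ_{0,1} = Δ_{N,N+1} = 0. Then the regularization terms cancel in the product dynamics: dW/dt = Σ_{j=1}^{N}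 P_{j+1} Pᴴ_{j+1} (Σ − W) Qᴴ_{j−1} Q_{j−1}, independent of a. -/
open Matrix

/-- The ordered product `W_j * W_{j-1} * ⋯ * W_1` (the identity if `j = 0`). -/
noncomputable def prodTo {d : ℕ} (W : ℕ → Matrix (Fin d) (Fin d) ℂ) (j : ℕ) :
    Matrix (Fin d) (Fin d) ℂ :=
  ((List.range j).map (fun i => W (j - i))).prod

lemma prodFrom_step {d : ℕ} (W : ℕ → Matrix (Fin d) (Fin d) ℂ) {j N : ℕ} (hj : j ≤ N) :
    prodFrom W j N = prodFrom W (j + 1) N * W j := by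
  unfold prodFrom
  have h1 : N + 1 - j = (N - j) + 1 := by omega
  have h2 : N + 1 - (j + 1) = N - j := by omega
  rw [h1, h2, List.range_succ, List.map_append, List.prod_append]
  have : N - (N - j) = j := by omega
  simp [this]

lemma prodTo_step {d : ℕ} (W : ℕ → Matrix (Fin d) (Fin d) ℂ) (k : ℕ) :
    prodTo W (k + 1) = W (k + 1) * prodTo W k := by
  unfold prodTo
  rw [List.range_succ_eq_map, List.map_cons, List.prod_cons, List.map_map]
  congr 2
  apply List.map_congr_left
  intro i _
  exact congrArg W (by omega)

/-- The regularization terms cancel in the product dynamics: with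
`P_{j+1} = W_N ⋯ W_{j+1}`, `Q_{j−1} = W_{j−1} ⋯ W_1`, `W = W_N ⋯ W_1`, target `T` and
regularization coefficient `a`,
`Σ_{j=1}^N P_{j+1} (Pᴴ_{j+1} (T − W) Qᴴ_{j−1} + a W_j Δ_{j−1,j} − a Δ_{j,j+1} W_j) Q_{j−1}
  = Σ_{j=1}^N P_{j+1} Pᴴ_{j+1} (T − W) Qᴴ_{j−1} Q_{j−1}`, independent of `a`. -/
theorem stmt19 {d N : ℕ} (hN : 1 ≤ N) (W : ℕ → Matrix (Fin d) (Fin d) ℂ)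
    (T : Matrix (Fin d) (Fin d) ℂ) (a : ℝ) :
    ∑ j ∈ Finset.Icc 1 N,
        prodFrom W (j + 1) N *
          ((prodFrom W (j + 1) N)ᴴ * (T - prodFrom W 1 N) * (prodTo W (j - 1))ᴴ
            + (a : ℂ) • (W j * Δbal W N (j - 1)) - (a : ℂ) • (Δbal W N j * W j)) *
          prodTo W (j - 1)
      = ∑ j ∈ Finset.Icc 1 N,
          prodFrom W (j + 1) N * (prodFrom W (j + 1) N)ᴴ * (T - prodFrom W 1 N) *
            (prodTo W (j - 1))ᴴ * prodTo W (j - 1) := by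
  set h : ℕ → Matrix (Fin d) (Fin d) ℂ :=
    fun j => prodFrom W (j + 1) N * Δbal W N j * prodTo W j with hh
  have key : ∀ j ∈ Finset.Icc 1 N,
      prodFrom W (j + 1) N *
          ((prodFrom W (j + 1) N)ᴴ * (T - prodFrom W 1 N) * (prodTo W (j - 1))ᴴ
            + (a : ℂ) • (W j * Δbal W N (j - 1)) - (a : ℂ) • (Δbal W N j * W j)) *
          prodTo W (j - 1)
      = prodFrom W (j + 1) N * (prodFrom W (j + 1) N)ᴴ * (T - prodFrom W 1 N) *
            (prodTo W (j - 1))ᴴ * prodTo W (j - 1)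
        + ((a : ℂ) • h (j - 1) - (a : ℂ) • h j) := by
    intro j hj
    simp only [Finset.mem_Icc] at hj
    obtain ⟨hj1, hj2⟩ := hj
    have e1 : j - 1 + 1 = j := by omega
    have hA : prodFrom W (j + 1) N * (W j * Δbal W N (j - 1)) * prodTo W (j - 1)
        = h (j - 1) := by
      rw [hh]
      simp only [e1]
      rw [← mul_assoc, ← prodFrom_step W hj2]
    have hB : prodFrom W (j + 1) N * (Δbal W N j * W j) * prodTo W (j - 1) = h j := by
      rw [hh]
      have : W j * prodTo W (j - 1) = prodTo W j := by
        conv_rhs => rw [← e1]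
        rw [prodTo_step, e1]
      rw [mul_assoc, mul_assoc, this, ← mul_assoc]
    rw [mul_sub, sub_mul, mul_add, add_mul, mul_smul_comm, smul_mul_assoc,
      mul_smul_comm, smul_mul_assoc, hA, hB]
    simp only [mul_assoc]
    abel
  rw [Finset.sum_congr rfl key, Finset.sum_add_distrib]
  have h0 : h 0 = 0 := by simp [hh, Δbal]
  have hNz : h N = 0 := by
    have : Δbal W N N = 0 := by
      unfold Δbal
      have : ¬ (1 ≤ N ∧ N ≤ N - 1) := by omega
      simp [this]
    simp [hh, this]
  have tele : ∑ j ∈ Finset.Icc 1 N, ((a : ℂ) • h (j - 1) - (a : ℂ) • h j) = 0 := by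
    rw [← Finset.Ico_add_one_right_eq_Icc, Finset.sum_Ico_eq_sum_range]
    have : ∀ i ∈ Finset.range (N + 1 - 1), (a : ℂ) • h (1 + i - 1) - (a : ℂ) • h (1 + i)
        = (a : ℂ) • h i - (a : ℂ) • h (i + 1) := by
      intro i _
      rw [show 1 + i - 1 = i from by omega, show 1 + i = i + 1 from by omega]
    rw [Finset.sum_congr rfl this, Finset.sum_range_sub' (fun i => (a : ℂ) • h i)]
    simp [h0, hNz]
  rw [tele, add_zero]
end
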